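/- arXiv:2102.12855 — 4 statements merged into one kernel-verified Lean document; each statement's English description precedes it below -/
import Mathlib

section
/- For any infinite sequence of states x_t x_{t+1} ... , define the return D(x_t) = Σ_{i=0}^∞ (Π_{j=0}^{i-1} γ(x_{t+j})) · R(x_{t+i}), where R(x) ∈ {0, 1 - r_F} and γ(x) ∈ {r_F, γ_F} with R(x) = 1 - r_F exactly when γ(x) = r_F, and 0 < γ_F < 1, 0 < r_F < 1. Then for every such sequence, 0 ≤ γ_F · D(x_{t+1:}) ≤ D(x_t) ≤ 1 - r_F + r_F · D(x_{t+1:}) ≤ 1, where x_{t+1:} denotes the shifted sequence starting at x_{t+1}. -/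
/-- The return of an infinite path: `D(x) = Σ_i (Π_{j<i} γ(x_j)) · R(x_i)`, where
accepting states have reward `1 - rF` and discount `rF`, and non-accepting states
have reward `0` and discount `γF`. -/
noncomputable def pathReturn {X : Type*} (acc : X → Prop) [DecidablePred acc]
    (rF γF : ℝ) (x : ℕ → X) : ℝ :=
  ∑' i : ℕ, (∏ j ∈ Finset.range i, (if acc (x j) then rF else γF)) *
    (if acc (x i) then 1 - rF else 0)

section aux

variable {X : Type*} (acc : X → Prop) [DecidablePred acc]
    (rF γF : ℝ) (hγ0 : 0 < γF) (hγ1 : γF < 1) (hr0 : 0 < rF) (hr1 : rF < 1)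
    (x : ℕ → X)

include hγ0 hγ1 hr0 hr1
set_option linter.unusedSectionVars false

lemma term_nonneg (i : ℕ) :
    0 ≤ (∏ j ∈ Finset.range i, (if acc (x j) then rF else γF)) *
      (if acc (x i) then 1 - rF else 0) := by
  apply mul_nonneg
  · exact Finset.prod_nonneg fun j _ => by split <;> linarith
  · split <;> linarith

lemma term_summable :
    Summable (fun i : ℕ => (∏ j ∈ Finset.range i, (if acc (x j) then rF else γF)) *
      (if acc (x i) then 1 - rF else 0)) := by
  set c := max rF γF with hc
  have hc0 : 0 ≤ c := le_trans hr0.le (le_max_left _ _)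
  have hc1 : c < 1 := max_lt hr1 hγ1
  apply Summable.of_nonneg_of_le (term_nonneg acc rF γF hγ0 hγ1 hr0 hr1 x)
    (f := fun i => c ^ i)
  · intro i
    calc (∏ j ∈ Finset.range i, (if acc (x j) then rF else γF)) *
        (if acc (x i) then 1 - rF else 0)
        ≤ (∏ j ∈ Finset.range i, (if acc (x j) then rF else γF)) * 1 := by
          apply mul_le_mul_of_nonneg_left _
            (Finset.prod_nonneg fun j _ => by split <;> linarith)
          split <;> linarith
      _ = ∏ j ∈ Finset.range i, (if acc (x j) then rF else γF) := mul_one _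
      _ ≤ ∏ j ∈ Finset.range i, c := by
          apply Finset.prod_le_prod (fun j _ => by split <;> linarith)
          intro j _; split
          · exact le_max_left _ _
          · exact le_max_right _ _
      _ = c ^ i := by simp
  · exact summable_geometric_of_lt_one hc0 hc1

lemma pathReturn_nonneg : 0 ≤ pathReturn acc rF γF x :=
  tsum_nonneg (term_nonneg acc rF γF hγ0 hγ1 hr0 hr1 x)

lemma pathReturn_le_one : pathReturn acc rF γF x ≤ 1 := by
  apply Summable.tsum_le_of_sum_range_le (term_summable acc rF γF hγ0 hγ1 hr0 hr1 x)
  intro n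
  set g : ℕ → ℝ := fun j => if acc (x j) then rF else γF with hg
  have key : ∀ i ∈ Finset.range n,
      (∏ j ∈ Finset.range i, g j) * (if acc (x i) then 1 - rF else 0)
        ≤ (∏ j ∈ Finset.range i, g j) - (∏ j ∈ Finset.range (i+1), g j) := by
    intro i _
    have hP : 0 ≤ ∏ j ∈ Finset.range i, g j :=
      Finset.prod_nonneg fun j _ => by simp only [hg]; split <;> linarith
    rw [Finset.prod_range_succ]
    have : (if acc (x i) then (1:ℝ) - rF else 0) ≤ 1 - g i := by
      simp only [hg]; split <;> linarith
    nlinarith [mul_le_mul_of_nonneg_left this hP]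
  calc ∑ i ∈ Finset.range n,
        (∏ j ∈ Finset.range i, g j) * (if acc (x i) then 1 - rF else 0)
      ≤ ∑ i ∈ Finset.range n,
        ((∏ j ∈ Finset.range i, g j) - (∏ j ∈ Finset.range (i+1), g j)) :=
        Finset.sum_le_sum key
    _ = (∏ j ∈ Finset.range 0, g j) - (∏ j ∈ Finset.range n, g j) :=
        Finset.sum_range_sub' (fun i => ∏ j ∈ Finset.range i, g j) n
    _ ≤ 1 := by
        simp only [Finset.range_zero, Finset.prod_empty]
        have : 0 ≤ ∏ j ∈ Finset.range n, g j :=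
          Finset.prod_nonneg fun j _ => by simp only [hg]; split <;> linarith
        linarith

lemma pathReturn_rec :
    pathReturn acc rF γF x = (if acc (x 0) then 1 - rF else 0) +
      (if acc (x 0) then rF else γF) * pathReturn acc rF γF (fun n => x (n + 1)) := by
  unfold pathReturn
  rw [Summable.tsum_eq_zero_add (term_summable acc rF γF hγ0 hγ1 hr0 hr1 x)]
  simp only [Finset.range_zero, Finset.prod_empty, one_mul]
  congr 1
  rw [← tsum_mul_left]
  congr 1
  funext i
  rw [Finset.prod_range_succ']
  ring

end aux

theorem stmt_0 {X : Type*} (acc : X → Prop) [DecidablePred acc]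
    (rF γF : ℝ) (hγ0 : 0 < γF) (hγ1 : γF < 1) (hr0 : 0 < rF) (hr1 : rF < 1)
    (x : ℕ → X) :
    0 ≤ γF * pathReturn acc rF γF (fun n => x (n + 1)) ∧
    γF * pathReturn acc rF γF (fun n => x (n + 1)) ≤ pathReturn acc rF γF x ∧
    pathReturn acc rF γF x ≤ 1 - rF + rF * pathReturn acc rF γF (fun n => x (n + 1)) ∧
    1 - rF + rF * pathReturn acc rF γF (fun n => x (n + 1)) ≤ 1 := by
  have h0 := pathReturn_nonneg acc rF γF hγ0 hγ1 hr0 hr1 (fun n => x (n + 1))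
  have h1 := pathReturn_le_one acc rF γF hγ0 hγ1 hr0 hr1 (fun n => x (n + 1))
  have hrec := pathReturn_rec acc rF γF hγ0 hγ1 hr0 hr1 x
  set D' := pathReturn acc rF γF (fun n => x (n + 1))
  refine ⟨mul_nonneg hγ0.le h0, ?_, ?_, by nlinarith⟩ <;> rw [hrec] <;>
    split <;> nlinarith
end

section
/- With the state-dependent reward R(x) = (1 - r_F)·[x accepting] and discount γ(x) = r_F if x accepting, else γ_F (with 0 < γ_F ≤ r_F < 1), if an infinite sequence of states contains exactly n accepting states (n finite), then its return D satisfies D ≤ 1 - r_F^n. -/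
theorem stmt_3 {X : Type*} (acc : X → Prop) [DecidablePred acc]
    (rF γF : ℝ) (hγ0 : 0 < γF) (hγr : γF ≤ rF) (hr1 : rF < 1)
    (x : ℕ → X) (n : ℕ)
    (hfin : {i : ℕ | acc (x i)}.Finite)
    (hcard : {i : ℕ | acc (x i)}.ncard = n) :
    pathReturn acc rF γF x ≤ 1 - rF ^ n := by
  classical
  have hr0 : 0 < rF := lt_of_lt_of_le hγ0 hγr
  set s := hfin.toFinset with hs
  have hmem : ∀ i, i ∈ s ↔ acc (x i) := fun i => hfin.mem_toFinset
  have hscard : s.card = n := by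
    rw [← hcard, Set.ncard_eq_toFinset_card _ hfin]
  set f : ℕ → ℝ := fun i =>
    (∏ j ∈ Finset.range i, (if acc (x j) then rF else γF)) *
      (if acc (x i) then 1 - rF else 0) with hf
  set k : ℕ → ℕ := fun i => (s.filter (· < i)).card with hk
  have hsum : pathReturn acc rF γF x = ∑ i ∈ s, f i := by
    apply tsum_eq_sum
    intro b hb
    have : ¬ acc (x b) := fun h => hb ((hmem b).mpr h)
    simp [hf, this]
  -- pointwise bound
  have hbound : ∀ i ∈ s, f i ≤ rF ^ (k i) * (1 - rF) := by
    intro i hi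
    have hacc : acc (x i) := (hmem i).mp hi
    have hfilter : (Finset.range i).filter (fun j => acc (x j)) = s.filter (· < i) := by
      ext j
      simp [hmem j, Finset.mem_filter, Finset.mem_range, and_comm]
    have hprod : (∏ j ∈ Finset.range i, (if acc (x j) then rF else γF)) ≤ rF ^ (k i) := by
      rw [← Finset.prod_filter_mul_prod_filter_not (Finset.range i) (fun j => acc (x j))]
      have h1 : (∏ j ∈ (Finset.range i).filter (fun j => acc (x j)),
          (if acc (x j) then rF else γF)) = rF ^ (k i) := by
        rw [Finset.prod_congr rfl (fun j hj => by
          simp only [Finset.mem_filter] at hj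
          rw [if_pos hj.2]), Finset.prod_const, hfilter]
      have h2 : (∏ j ∈ (Finset.range i).filter (fun j => ¬ acc (x j)),
          (if acc (x j) then rF else γF)) ≤ 1 := by
        apply Finset.prod_le_one
        · intro j hj
          split <;> positivity
        · intro j hj
          simp only [Finset.mem_filter] at hj
          rw [if_neg hj.2]
          exact le_of_lt (lt_of_le_of_lt hγr hr1)
      calc _ ≤ rF ^ (k i) * 1 := by
            rw [h1]
            apply mul_le_mul_of_nonneg_left h2 (by positivity)
        _ = rF ^ (k i) := mul_one _
    rw [hf]
    simp only [if_pos hacc]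
    exact mul_le_mul_of_nonneg_right hprod (by linarith)
  -- k is injective on s and its image is range n
  have hkinj : Set.InjOn k s := by
    have hmono : ∀ a ∈ s, ∀ b ∈ s, a < b → k a < k b := by
      intro a ha b hb hab
      apply Finset.card_lt_card
      constructor
      · intro j hj
        simp only [Finset.mem_filter] at hj ⊢
        exact ⟨hj.1, lt_trans hj.2 hab⟩
      · intro hsub
        have : a ∈ s.filter (· < b) := Finset.mem_filter.mpr ⟨ha, hab⟩
        have := hsub this
        simp at this
    intro a ha b hb hab
    rcases lt_trichotomy a b with h | h | h
    · exact absurd hab (ne_of_lt (hmono a ha b hb h))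
    · exact h
    · exact absurd hab.symm (ne_of_lt (hmono b hb a ha h))
  have himg : s.image k = Finset.range n := by
    apply Finset.eq_of_subset_of_card_le
    · intro m hm
      rw [Finset.mem_image] at hm
      obtain ⟨i, hi, rfl⟩ := hm
      rw [Finset.mem_range, ← hscard]
      apply Finset.card_lt_card
      refine ⟨Finset.filter_subset _ _, fun hsub => ?_⟩
      have := hsub hi
      simp at this
    · rw [Finset.card_range, ← hscard]
      exact le_of_eq (Finset.card_image_of_injOn hkinj).symm
  have hgeom : ∑ m ∈ Finset.range n, rF ^ m * (1 - rF) = 1 - rF ^ n := by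
    rw [← Finset.sum_mul]
    have := geom_sum_mul rF n
    nlinarith [this]
  calc pathReturn acc rF γF x = ∑ i ∈ s, f i := hsum
    _ ≤ ∑ i ∈ s, rF ^ (k i) * (1 - rF) := Finset.sum_le_sum hbound
    _ = ∑ m ∈ s.image k, rF ^ m * (1 - rF) := (Finset.sum_image (f := fun m => rF ^ m * (1 - rF)) (fun a ha b hb => hkinj ha hb)).symm
    _ = 1 - rF ^ n := by rw [himg, hgeom]
end

section
/- Let M be a Markov decision process with state space X, let R: X × A × X → ℝ be a reward function, γ ∈ (0,1) a constant discount factor, and Φ: X → ℝ any bounded potential function. Define the shaped reward R'(x, a, x') = R(x, a, x') + γ·Φ(x') − Φ(x). Then for any stationary policy π, the value function under R' equals the value function under R minus Φ: U'^π(x) = U^π(x) − Φ(x) for all states x. Consequently, a policy is optimal for the shaped reward if and only if it is optimal for the original reward. -/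
open ProbabilityTheory MeasureTheory

/-- The kernel of the Markov chain induced on the state space by following the
stationary (deterministic) policy `π` in an MDP with transition kernel `p`. -/
noncomputable def policyKernel {X A : Type*} [MeasurableSpace X] [MeasurableSpace A]
    (p : Kernel (X × A) X) (π : X → A) (hπ : Measurable π) : Kernel X X :=
  p.comap (fun x => (x, π x)) (measurable_id.prodMk hπ)

/-- `n`-step iterate of a kernel. -/
noncomputable def nStep {X : Type*} [MeasurableSpace X] (κ : Kernel X X) : ℕ → Kernel X X
  | 0 => Kernel.id
  | n + 1 => (nStep κ n) ∘ₖ κ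

/-- The value function of the stationary policy `π`:
`U^π(x) = Σ_n γ^n E[R(X_n, π(X_n), X_{n+1}) | X_0 = x]`. -/
noncomputable def valueFn {X A : Type*} [MeasurableSpace X] [MeasurableSpace A]
    (p : Kernel (X × A) X) (R : X → A → X → ℝ) (γ : ℝ)
    (π : X → A) (hπ : Measurable π) (x : X) : ℝ :=
  ∑' n : ℕ, γ ^ n *
    ∫ y, (∫ z, R y (π y) z ∂(p (y, π y))) ∂(nStep (policyKernel p π hπ) n x)

/-!
Under a fixed policy the states form a Markov chain with kernel `κ`, and the expected shaped
reward at time `n` is the expected original reward plus `γ E[Φ(X_{n+1})] - E[Φ(X_n)]`.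
After discounting by `γ ^ n` the potential terms telescope, and since `Φ` is bounded and
`|γ| < 1` the tail `γ ^ n E[Φ(X_n)]` vanishes, leaving `-Φ(X_0) = -Φ(x)`. Shifting every
value function by the same `-Φ` does not change which policies are optimal.
-/

section BoundedFunction

variable {α : Type*} [MeasurableSpace α] {f : α → ℝ} {C : ℝ}

lemma integrable_of_abs_le (μ : Measure α) [IsFiniteMeasure μ] (hf : Measurable f)
    (hC : ∀ x, |f x| ≤ C) : Integrable f μ :=
  .of_bound hf.aestronglyMeasurable C (ae_of_all _ hC)

lemma abs_integral_le_of_abs_le (μ : Measure α) [IsProbabilityMeasure μ]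
    (hC : ∀ x, |f x| ≤ C) : |∫ x, f x ∂μ| ≤ C := by
  simpa using norm_integral_le_of_norm_le_const (μ := μ) (f := f) (ae_of_all _ hC)

end BoundedFunction

section Discounting

variable {γ C : ℝ} {u : ℕ → ℝ}

lemma summable_pow_mul_of_abs_le (hγ : |γ| < 1) (hu : ∀ n, |u n| ≤ C) :
    Summable fun n => γ ^ n * u n :=
  .of_norm_bounded ((summable_geometric_of_lt_one (abs_nonneg γ) hγ).mul_right C) fun n => by
    rw [Real.norm_eq_abs, abs_mul, abs_pow]
    exact mul_le_mul_of_nonneg_left (hu n) (by positivity)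

lemma hasSum_pow_mul_telescope (hγ : |γ| < 1) (hu : ∀ n, |u n| ≤ C) :
    HasSum (fun n => γ ^ n * (γ * u (n + 1) - u n)) (-u 0) := by
  have hb := (summable_pow_mul_of_abs_le hγ hu).hasSum
  have h := ((hasSum_nat_add_iff' 1).2 hb).sub hb
  rw [Finset.sum_range_one, pow_zero, one_mul, sub_sub_cancel_left] at h
  exact h.congr_fun fun n => by ring

end Discounting

section Kernel

variable {X : Type*} [MeasurableSpace X]

instance isMarkovKernel_policyKernel {A : Type*} [MeasurableSpace A] (p : Kernel (X × A) X)
    [IsMarkovKernel p] (π : X → A) (hπ : Measurable π) : IsMarkovKernel (policyKernel p π hπ) :=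
  Kernel.IsMarkovKernel.comap p _

instance isMarkovKernel_pow (κ : Kernel X X) [IsMarkovKernel κ] (n : ℕ) :
    IsMarkovKernel (κ ^ n) := by
  induction n with
  | zero => rw [pow_zero]; exact inferInstanceAs (IsMarkovKernel Kernel.id)
  | succ n ih => rw [pow_succ]; exact Kernel.IsMarkovKernel.comp _ _

lemma nStep_eq_pow (κ : Kernel X X) (n : ℕ) : nStep κ n = κ ^ n := by
  induction n with
  | zero => rfl
  | succ n ih => rw [pow_succ, ← ih]; rfl

lemma integral_pow_succ (κ : Kernel X X) [IsMarkovKernel κ] {f : X → ℝ} {C : ℝ}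
    (hf : Measurable f) (hC : ∀ x, |f x| ≤ C) (n : ℕ) (x : X) :
    ∫ z, f z ∂(κ ^ (n + 1)) x = ∫ y, ∫ z, f z ∂κ y ∂(κ ^ n) x := by
  rw [pow_succ']
  exact Kernel.integral_comp (integrable_of_abs_le _ hf hC)

end Kernel

section Shaping

variable {X : Type*} [MeasurableSpace X] {κ : Kernel X X} [IsMarkovKernel κ]
  {ρ : X → X → ℝ} {Φ : X → ℝ} {γ C D : ℝ}

noncomputable def discountedValue (κ : Kernel X X) (ρ : X → X → ℝ) (γ : ℝ) (x : X) : ℝ :=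
  ∑' n : ℕ, γ ^ n * ∫ y, (∫ z, ρ y z ∂(κ y)) ∂((κ ^ n) x)

lemma valueFn_eq_discountedValue {A : Type*} [MeasurableSpace A] (p : Kernel (X × A) X)
    (R : X → A → X → ℝ) (γ : ℝ) (π : X → A) (hπ : Measurable π) (x : X) :
    valueFn p R γ π hπ x =
      discountedValue (policyKernel p π hπ) (fun y z => R y (π y) z) γ x := by
  simp only [valueFn, discountedValue, nStep_eq_pow]
  rfl

lemma integral_integral_add_potential (hρ : Measurable (Function.uncurry ρ))
    (hρC : ∀ y z, |ρ y z| ≤ C) (hΦ : Measurable Φ) (hΦD : ∀ y, |Φ y| ≤ D)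
    (μ : Measure X) [IsFiniteMeasure μ] :
    ∫ y, ∫ z, (ρ y z + γ * Φ z - Φ y) ∂κ y ∂μ =
      ∫ y, ∫ z, ρ y z ∂κ y ∂μ + (γ * ∫ y, ∫ z, Φ z ∂κ y ∂μ - ∫ y, Φ y ∂μ) := by
  have hρy (y : X) : Integrable (ρ y) (κ y) :=
    integrable_of_abs_le _ (hρ.comp measurable_prodMk_left) (hρC y)
  have hΦκ (y : X) : Integrable Φ (κ y) := integrable_of_abs_le _ hΦ hΦD
  have hinner (y : X) : ∫ z, (ρ y z + γ * Φ z - Φ y) ∂κ y =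
      ∫ z, ρ y z ∂κ y + γ * ∫ z, Φ z ∂κ y - Φ y := by
    rw [integral_sub (f := fun z => ρ y z + γ * Φ z) ((hρy y).add ((hΦκ y).const_mul γ))
        (integrable_const _),
      integral_add (hρy y) ((hΦκ y).const_mul γ), integral_const_mul]
    simp
  have hr : Integrable (fun y => ∫ z, ρ y z ∂κ y) μ :=
    integrable_of_abs_le _ (hρ.stronglyMeasurable.integral_kernel_prod_right).measurable
      fun y => abs_integral_le_of_abs_le _ (hρC y)
  have hg : Integrable (fun y => ∫ z, Φ z ∂κ y) μ :=
    integrable_of_abs_le _ (hΦ.stronglyMeasurable.integral_kernel).measurable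
      fun y => abs_integral_le_of_abs_le _ hΦD
  simp_rw [hinner]
  rw [integral_sub (f := fun y => ∫ z, ρ y z ∂κ y + γ * ∫ z, Φ z ∂κ y)
      (hr.add (hg.const_mul γ)) (integrable_of_abs_le _ hΦ hΦD),
    integral_add hr (hg.const_mul γ), integral_const_mul, add_sub_assoc]

theorem discountedValue_add_potential (hγ : |γ| < 1) (hρ : Measurable (Function.uncurry ρ))
    (hρC : ∀ y z, |ρ y z| ≤ C) (hΦ : Measurable Φ) (hΦD : ∀ y, |Φ y| ≤ D) (x : X) :
    discountedValue κ (fun y z => ρ y z + γ * Φ z - Φ y) γ x =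
      discountedValue κ ρ γ x - Φ x := by
  set Ψ : ℕ → ℝ := fun n => ∫ y, Φ y ∂(κ ^ n) x
  have hΨ0 : Ψ 0 = Φ x := integral_dirac' Φ x hΦ.stronglyMeasurable
  have hΨD (n : ℕ) : |Ψ n| ≤ D := abs_integral_le_of_abs_le _ hΦD
  have hreward : HasSum (fun n => γ ^ n * ∫ y, ∫ z, ρ y z ∂κ y ∂(κ ^ n) x)
      (discountedValue κ ρ γ x) :=
    (summable_pow_mul_of_abs_le hγ fun n => abs_integral_le_of_abs_le _
      fun y => abs_integral_le_of_abs_le _ (hρC y)).hasSum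
  rw [discountedValue, ← hΨ0, sub_eq_add_neg]
  refine ((hreward.add (hasSum_pow_mul_telescope hγ hΨD)).congr_fun fun n => ?_).tsum_eq
  rw [integral_integral_add_potential hρ hρC hΦ hΦD, ← integral_pow_succ κ hΦ hΦD, mul_add]

end Shaping

theorem stmt_4 {X A : Type*} [MeasurableSpace X] [MeasurableSpace A]
    (p : Kernel (X × A) X) [IsMarkovKernel p]
    (R : X → A → X → ℝ) (γ : ℝ) (hγ0 : 0 < γ) (hγ1 : γ < 1)
    (Φ : X → ℝ)
    (hΦmeas : Measurable Φ)
    (hRbdd : ∃ C : ℝ, ∀ x a x', |R x a x'| ≤ C)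
    (hΦbdd : ∃ C : ℝ, ∀ x, |Φ x| ≤ C)
    (hRmeas : Measurable fun q : (X × A) × X => R q.1.1 q.1.2 q.2)
    -- the shaped reward `R'(x, a, x') = R(x, a, x') + γ Φ(x') − Φ(x)`
    (R' : X → A → X → ℝ)
    (hR' : ∀ x a x', R' x a x' = R x a x' + γ * Φ x' - Φ x) :
    -- (1) the shaped value function equals the original one minus the potential
    (∀ (π : X → A) (hπ : Measurable π) (x : X),
      valueFn p R' γ π hπ x = valueFn p R γ π hπ x - Φ x) ∧
    -- (2) a policy is optimal for the shaped reward iff it is optimal for the original one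
    (∀ (π : X → A) (hπ : Measurable π),
      (∀ (σ : X → A) (hσ : Measurable σ) (x : X),
          valueFn p R' γ σ hσ x ≤ valueFn p R' γ π hπ x) ↔
      (∀ (σ : X → A) (hσ : Measurable σ) (x : X),
          valueFn p R γ σ hσ x ≤ valueFn p R γ π hπ x)) := by
  obtain ⟨C, hRC⟩ := hRbdd
  obtain ⟨D, hΦD⟩ := hΦbdd
  have hγ : |γ| < 1 := abs_lt.2 ⟨by linarith, hγ1⟩
  have shaping (π : X → A) (hπ : Measurable π) (x : X) :
      valueFn p R' γ π hπ x = valueFn p R γ π hπ x - Φ x := by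
    have hRπ : Measurable (Function.uncurry fun y z => R y (π y) z) :=
      hRmeas.comp ((measurable_fst.prodMk (hπ.comp measurable_fst)).prodMk measurable_snd)
    simp only [valueFn_eq_discountedValue, hR']
    exact discountedValue_add_potential hγ hRπ (fun y z => hRC y (π y) z) hΦmeas hΦD x
  refine ⟨shaping, fun π hπ => forall₂_congr fun σ hσ => forall_congr' fun x => ?_⟩
  rw [shaping, shaping, sub_le_sub_iff_right]
end

section
/- Let F = {F_1, ..., F_f} be a finite family of nonempty subsets of a finite set Q. Define the frontier update f_V on pairs (q, T) with T ⊆ F by: if q ∈ F_j for some F_j ∈ T, the new frontier is T \ {F_j}; if q ∈ F_j and T = ∅, the new frontier is F \ {F_j}; otherwise T is unchanged. Then along any infinite sequence of states q_0 q_1 q_2 ... in which some fixed set F_k ∈ F is visited infinitely often (i.e., q_n ∈ F_k for infinitely many n) and the frontier is reset (becomes F \ {F_j}) infinitely often, every set F_i ∈ F must be visited infinitely often. -/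
/-- The tracking-frontier mechanism: `Fs j` (for `j : Fin f`) are the accepting
sets, `q` is the run of states, and `Ts n` the frontier of (indices of)
unvisited accepting sets at time `n`, initialized to all of them and updated by
the rule `f_V`: if the current state lies in some set of the frontier, that set
is removed; if the frontier is empty and the state lies in some accepting set
`F_j`, the frontier resets to all sets except `F_j`; otherwise it is unchanged.
If some accepting set is visited infinitely often and the frontier is reset
infinitely often, then every accepting set is visited infinitely often. -/
theorem stmt_11 {Q : Type*} {f : ℕ} (Fs : Fin f → Set Q)
    (hne : ∀ j, (Fs j).Nonempty)
    (q : ℕ → Q) (Ts : ℕ → Finset (Fin f))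
    (hT0 : Ts 0 = Finset.univ)
    (hupd : ∀ n : ℕ,
      (∃ j : Fin f, q n ∈ Fs j ∧ j ∈ Ts n ∧ Ts (n + 1) = (Ts n).erase j) ∨
      (Ts n = ∅ ∧ ∃ j : Fin f, q n ∈ Fs j ∧ Ts (n + 1) = Finset.univ.erase j) ∨
      ((∀ j ∈ Ts n, q n ∉ Fs j) ∧ (Ts n = ∅ → ∀ j : Fin f, q n ∉ Fs j) ∧
        Ts (n + 1) = Ts n))
    (hvisit : ∃ k : Fin f, ∀ N : ℕ, ∃ n ≥ N, q n ∈ Fs k)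
    (hreset : ∀ N : ℕ, ∃ n ≥ N, Ts n = ∅ ∧ ∃ j : Fin f, q n ∈ Fs j) :
    ∀ i : Fin f, ∀ N : ℕ, ∃ n ≥ N, q n ∈ Fs i := by
  intro i N
  -- Key lemma: if `i ∈ Ts n` and `Ts (n + d) = ∅`, then `q m ∈ Fs i` for some `m ≥ n`.
  have key : ∀ d n, i ∈ Ts n → Ts (n + d) = ∅ → ∃ m ≥ n, q m ∈ Fs i := by
    intro d
    induction d with
    | zero =>
      intro n hi hemp
      rw [Nat.add_zero] at hemp; rw [hemp] at hi
      exact absurd hi (Finset.notMem_empty i)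
    | succ d ih =>
      intro n hi hemp
      by_cases h1 : i ∈ Ts (n + 1)
      · obtain ⟨m, hm, hq⟩ := ih (n + 1) h1 (by rw [show n + 1 + d = n + (d + 1) by ring]; exact hemp)
        exact ⟨m, le_trans (Nat.le_succ n) hm, hq⟩
      · rcases hupd n with ⟨j, hqj, hjT, hE⟩ | ⟨hT, _⟩ | ⟨_, _, hE⟩
        · rcases eq_or_ne i j with rfl | hij
          · exact ⟨n, le_refl n, hqj⟩
          · exact absurd (hE ▸ Finset.mem_erase.mpr ⟨hij, hi⟩) h1
        · rw [hT] at hi; exact absurd hi (Finset.notMem_empty i)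
        · rw [hE] at h1; exact absurd hi h1
  -- Take a reset time `n ≥ N`.
  obtain ⟨n, hn, hTn, j, hqj⟩ := hreset N
  -- At that time the update must be the reset case.
  have hres : Ts (n + 1) = Finset.univ.erase j ∧ q n ∈ Fs j ∨
      ∃ j' : Fin f, q n ∈ Fs j' ∧ Ts (n + 1) = Finset.univ.erase j' := by
    rcases hupd n with ⟨j', _, hj'T, _⟩ | ⟨_, j', hq', hE⟩ | ⟨_, h0, _⟩
    · rw [hTn] at hj'T; exact absurd hj'T (Finset.notMem_empty j')
    · exact Or.inr ⟨j', hq', hE⟩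
    · exact absurd hqj (h0 hTn j)
  obtain ⟨j', hqj', hE⟩ : ∃ j' : Fin f, q n ∈ Fs j' ∧ Ts (n + 1) = Finset.univ.erase j' := by
    rcases hres with ⟨hE, hq⟩ | h
    · exact ⟨j, hq, hE⟩
    · exact h
  rcases eq_or_ne i j' with rfl | hij
  · exact ⟨n, hn, hqj'⟩
  · -- `i` is in the new frontier; find the next reset and apply the key lemma.
    have hi1 : i ∈ Ts (n + 1) := by
      rw [hE]; exact Finset.mem_erase.mpr ⟨hij, Finset.mem_univ i⟩
    obtain ⟨m, hm, hTm, _⟩ := hreset (n + 1)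
    obtain ⟨p, hp, hqp⟩ := key (m - (n + 1)) (n + 1) hi1
      (by rwa [Nat.add_sub_cancel' hm])
    exact ⟨p, le_trans (le_trans hn (Nat.le_succ n)) hp, hqp⟩
end
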